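/- arXiv:1509.04686 — 4 statements merged into one kernel-verified Lean document; each statement's English description precedes it below -/
import Mathlib

section
/- Let m ≥ 1 be an integer, let p ∈ (0, 1/2] and q = 1 − p, and let t ∈ [0, 1). Let (ξ_i)_{i≥1} be i.i.d. random variables with P(ξ_i = 1) = p and P(ξ_i = −1) = q, let S_n = ξ_1 + ⋯ + ξ_n, and let T = inf{n ≥ 1 : S_n = −m} (which is finite almost surely since p ≤ 1/2, and T + m is even almost surely). Let (Y_i)_{i≥1} be i.i.d. random variables uniformly distributed on [0,1], independent of (ξ_i)_{i≥1}, and set Z_m = max{Y_i : 1 ≤ i ≤ (T+m)/2}. Then P[Z_m ≤ t] = (qt)^m · ∑_{k=0}^∞ [(m/2)_k ((m+1)/2)_k / ((m+1)_k · k!)] (4pqt)^k, i.e. P[Z_m ≤ t] = (qt)^m · ₂F₁(m/2, (m+1)/2; m+1; 4pqt). -/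
/-
On the event `T = n` the event `Z_m ≤ t` says that the first `(n + m) / 2` fitnesses are `≤ t`.
The fitnesses being independent of the walk, `P[Z_m ≤ t] = ∑ₙ P[T = n] t^((n + m) / 2)`, where the
events `T = n` exhaust `Ω` up to a null set because the drift `p - q` is `≤ 0`. First-step analysis
gives `P[T = m + 2k] = ballot(m, k) p^k q^(m+k)` with `ballot(m, k) = (m)_{2k} / ((m+1)_k k!)`, and
the duplication formula `(m)_{2k} = 4^k (m/2)_k ((m+1)/2)_k` turns the series into the
hypergeometric one.
-/

open MeasureTheory ProbabilityTheory Finset Polynomial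
open scoped Nat
open Set (Icc Iic)

noncomputable section

lemma MeasurableSpace.comap_pi_eq_iSup {Ω κ β : Type*} [MeasurableSpace β] (g : κ → Ω → β) :
    MeasurableSpace.comap (fun ω k => g k ω) MeasurableSpace.pi =
      ⨆ k, MeasurableSpace.comap (g k) inferInstance := by
  simp only [MeasurableSpace.pi, MeasurableSpace.comap_iSup, MeasurableSpace.comap_comp]
  rfl

theorem ProbabilityTheory.iIndepFun.indepFun_pi_of_ne {Ω ι κ κ' β : Type*} [MeasurableSpace Ω]
    {μ : Measure Ω} [MeasurableSpace β] {f : ι → Ω → β} (hf : ∀ i, Measurable (f i))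
    (h : iIndepFun f μ) {a : κ → ι} {b : κ' → ι} (hab : ∀ k l, a k ≠ b l) :
    IndepFun (fun ω k => f (a k) ω) (fun ω l => f (b l) ω) μ := by
  have hdisj : Disjoint (Set.range a) (Set.range b) :=
    Set.disjoint_left.mpr fun _ ⟨k, hk⟩ ⟨l, hl⟩ => hab k l (hk.trans hl.symm)
  rw [IndepFun_iff_Indep, MeasurableSpace.comap_pi_eq_iSup, MeasurableSpace.comap_pi_eq_iSup]
  rw [iIndepFun_iff_iIndep] at h
  refine indep_of_indep_of_le_right (indep_of_indep_of_le_left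
    (indep_iSup_of_disjoint (fun i => (hf i).comap_le) h hdisj) ?_) ?_ <;>
  exact iSup_le fun k => le_iSup₂_of_le _ ⟨k, rfl⟩ le_rfl

lemma Real.biSup_le_iff {ι : Type*} {s : Finset ι} {f : ι → ℝ} {t : ℝ} (ht : 0 ≤ t) :
    (⨆ i ∈ s, f i) ≤ t ↔ ∀ i ∈ s, f i ≤ t := by
  refine ⟨fun h i hi => ?_, fun h => Real.iSup_le (fun i => Real.iSup_le (h i) ht) ht⟩
  have hbdd : BddAbove (Set.range fun i => ⨆ _ : i ∈ s, f i) :=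
    ⟨∑ i ∈ s, |f i|, Set.forall_mem_range.mpr fun i => Real.iSup_le
      (fun hi => (le_abs_self _).trans (single_le_sum (fun i _ => abs_nonneg (f i)) hi))
      (sum_nonneg fun i _ => abs_nonneg (f i))⟩
  calc f i = ⨆ _ : i ∈ s, f i := (ciSup_pos (f := fun _ => f i) hi).symm
    _ ≤ ⨆ i ∈ s, f i := le_ciSup hbdd i
    _ ≤ t := h

lemma ascPochhammer_eval_succ_left {S : Type*} [CommSemiring S] (n : ℕ) (x : S) :
    (ascPochhammer S (n + 1)).eval x = x * (ascPochhammer S n).eval (x + 1) := by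
  simp [ascPochhammer_succ_left, eval_comp]

lemma ascPochhammer_eval_two_mul {K : Type*} [Field K] [CharZero K] (k : ℕ) (x : K) :
    (ascPochhammer K (2 * k)).eval x =
      4 ^ k * (ascPochhammer K k).eval (x / 2) * (ascPochhammer K k).eval ((x + 1) / 2) := by
  induction k with
  | zero => simp
  | succ k ih =>
    rw [show 2 * (k + 1) = 2 * k + 1 + 1 by ring, ascPochhammer_succ_eval, ascPochhammer_succ_eval,
      ih, ascPochhammer_succ_eval, ascPochhammer_succ_eval]
    push_cast
    ring

namespace SimpleRandomWalk

/-- For `j + 2k > 0` this is `j / (j + 2k) * (j + 2k).choose k`, the number of `±1` paths with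
`k` up-steps and `j + k` down-steps that first reach `-j` at their last step. -/
def ballotNumber (j k : ℕ) : ℝ :=
  (ascPochhammer ℝ (2 * k)).eval (j : ℝ) / ((ascPochhammer ℝ k).eval ((j : ℝ) + 1) * k !)

@[simp] lemma ballotNumber_zero_right (j : ℕ) : ballotNumber j 0 = 1 := by
  simp [ballotNumber]

@[simp] lemma ballotNumber_zero_succ (k : ℕ) : ballotNumber 0 (k + 1) = 0 := by
  simp [ballotNumber]

lemma ballotNumber_succ_succ (j k : ℕ) :
    ballotNumber (j + 1) (k + 1) = ballotNumber j (k + 1) + ballotNumber (j + 2) k := by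
  simp only [ballotNumber, Nat.cast_add, Nat.cast_ofNat, Nat.cast_one]
  set x : ℝ := (j : ℝ)
  have hx : 0 ≤ x := Nat.cast_nonneg j
  have hshift : ∀ n, (ascPochhammer ℝ n).eval (x + 3) =
      (x + 2 + n) * (ascPochhammer ℝ n).eval (x + 2) / (x + 2) := fun n => by
    rw [eq_div_iff (by positivity), show x + 3 = x + 2 + 1 by ring, mul_comm,
      ← ascPochhammer_eval_succ_left, ascPochhammer_succ_eval, mul_comm]
  have hpos : 0 < (ascPochhammer ℝ k).eval (x + 2) := ascPochhammer_pos k _ (by positivity)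
  rw [show 2 * (k + 1) = 2 * k + 1 + 1 by ring]
  simp only [ascPochhammer_eval_succ_left, Nat.factorial_succ, Nat.cast_mul, Nat.cast_add,
    Nat.cast_one, show x + 1 + 1 = x + 2 by ring, show x + 2 + 1 = x + 3 by ring, hshift]
  push_cast
  -- what remains is `(x + 1) (x + 2k + 2) = x (x + k + 2) + (x + 2) (k + 1)`
  field_simp
  ring

def firstPassageProb (p q : ℝ) : ℕ → ℕ → ℝ
  | 0, 0 => 1
  | 0, _ + 1 => 0
  | _ + 1, 0 => 0
  | j + 1, n + 1 => q * firstPassageProb p q j n + p * firstPassageProb p q (j + 2) n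

section FirstPassageProb

variable {p q : ℝ}

@[simp] lemma firstPassageProb_zero_zero : firstPassageProb p q 0 0 = 1 := by
  simp [firstPassageProb]

@[simp] lemma firstPassageProb_zero_succ (n : ℕ) : firstPassageProb p q 0 (n + 1) = 0 := by
  simp [firstPassageProb]

@[simp] lemma firstPassageProb_succ_zero (j : ℕ) : firstPassageProb p q (j + 1) 0 = 0 := by
  simp [firstPassageProb]

lemma firstPassageProb_succ_succ (j n : ℕ) :
    firstPassageProb p q (j + 1) (n + 1) =
      q * firstPassageProb p q j n + p * firstPassageProb p q (j + 2) n := by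
  rw [firstPassageProb]

lemma firstPassageProb_nonneg (hp : 0 ≤ p) (hq : 0 ≤ q) (j n : ℕ) :
    0 ≤ firstPassageProb p q j n := by
  induction n generalizing j with
  | zero => cases j <;> simp
  | succ n ih =>
    cases j with
    | zero => simp
    | succ j =>
      rw [firstPassageProb_succ_succ]
      exact add_nonneg (mul_nonneg hq (ih j)) (mul_nonneg hp (ih (j + 2)))

lemma firstPassageProb_eq_zero {j n : ℕ} (h : ∀ k, n ≠ j + 2 * k) :
    firstPassageProb p q j n = 0 := by
  induction n generalizing j with
  | zero => cases j with
    | zero => exact absurd rfl (h 0)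
    | succ j => simp
  | succ n ih =>
    cases j with
    | zero => simp
    | succ j =>
      rw [firstPassageProb_succ_succ, ih (fun k hk => h k (by omega)),
        ih (fun k hk => h (k + 1) (by omega))]
      ring

lemma firstPassageProb_self (j : ℕ) : firstPassageProb p q j j = q ^ j := by
  induction j with
  | zero => simp
  | succ j ih =>
    rw [firstPassageProb_succ_succ, ih, firstPassageProb_eq_zero (by omega)]
    ring

lemma firstPassageProb_add_two_mul (j k : ℕ) :
    firstPassageProb p q j (j + 2 * k) = ballotNumber j k * p ^ k * q ^ (j + k) := by
  induction k generalizing j with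
  | zero => simp [firstPassageProb_self]
  | succ k ih =>
    induction j with
    | zero => simp [show 0 + 2 * (k + 1) = 2 * k + 1 + 1 by ring]
    | succ j ihj =>
      rw [show j + 1 + 2 * (k + 1) = j + 2 * (k + 1) + 1 by ring, firstPassageProb_succ_succ, ihj,
        show j + 2 * (k + 1) = j + 2 + 2 * k by ring, ih, ballotNumber_succ_succ]
      ring

lemma sum_range_firstPassageProb_le_one (hp : 0 ≤ p) (hq : 0 ≤ q) (hpq : p + q = 1) (N j : ℕ) :
    ∑ n ∈ range N, firstPassageProb p q j n ≤ 1 := by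
  induction N generalizing j with
  | zero => simp
  | succ N ih =>
    rw [sum_range_succ']
    cases j with
    | zero => simp
    | succ j =>
      simp only [firstPassageProb_succ_succ, sum_add_distrib, ← mul_sum,
        firstPassageProb_succ_zero, add_zero]
      nlinarith [ih j, ih (j + 2)]

/-- The increments `σ j - σ (j + 1)` grow geometrically with ratio `q / p ≥ 1`, which the
boundedness of `σ` forbids unless they vanish. -/
lemma eq_one_of_harmonic {σ : ℕ → ℝ} (hp : 0 < p) (hle : p ≤ q) (hpq : p + q = 1)
    (hσ : ∀ j, σ j ∈ Set.Icc 0 1) (h0 : σ 0 = 1)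
    (hrec : ∀ j, σ (j + 1) = q * σ j + p * σ (j + 2)) (j : ℕ) : σ j = 1 := by
  set d : ℕ → ℝ := fun j => σ j - σ (j + 1)
  have hd : ∀ j, p * d (j + 1) = q * d j := fun j => by
    simp only [d]; linear_combination hrec j + σ (j + 1) * hpq
  have hd0 : 0 ≤ d 0 := by simp only [d, h0]; linarith [(hσ 1).2]
  have hmono : ∀ j, d 0 ≤ d j := by
    intro j
    induction j with
    | zero => exact le_rfl
    | succ j ih => nlinarith [hd j]
  have htel : ∀ j, j * d 0 ≤ σ 0 - σ j := by
    intro j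
    calc (j : ℝ) * d 0 = ∑ _i ∈ range j, d 0 := by simp
      _ ≤ ∑ i ∈ range j, d i := sum_le_sum fun i _ => hmono i
      _ = σ 0 - σ j := sum_range_sub' σ j
  have hd0' : d 0 = 0 := by
    refine le_antisymm (le_of_forall_pos_le_add fun ε hε => ?_) hd0
    obtain ⟨j, hj⟩ := exists_nat_gt (1 / ε)
    have := htel j
    rw [div_lt_iff₀ hε] at hj
    nlinarith [(hσ j).1]
  have hdj : ∀ j, d j = 0 := by
    intro j
    induction j with
    | zero => exact hd0'
    | succ j ih => simpa [ih, hp.ne'] using hd j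
  induction j with
  | zero => exact h0
  | succ j ih => linarith [hdj j, show d j = σ j - σ (j + 1) from rfl]

lemma summable_firstPassageProb (hp : 0 ≤ p) (hq : 0 ≤ q) (hpq : p + q = 1) (j : ℕ) :
    Summable (firstPassageProb p q j) :=
  summable_of_sum_range_le (firstPassageProb_nonneg hp hq j)
    (sum_range_firstPassageProb_le_one hp hq hpq · j)

lemma hasSum_firstPassageProb (hp : 0 < p) (hle : p ≤ q) (hpq : p + q = 1) (j : ℕ) :
    HasSum (firstPassageProb p q j) 1 := by
  have hq : 0 ≤ q := by linarith
  have hs := summable_firstPassageProb hp.le hq hpq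
  refine (hs j).hasSum_iff.mpr (eq_one_of_harmonic (σ := fun j => ∑' n, firstPassageProb p q j n)
    hp hle hpq (fun j => ⟨?_, ?_⟩) ?_ ?_ j)
  · exact tsum_nonneg (firstPassageProb_nonneg hp.le hq j)
  · exact (hs j).tsum_le_of_sum_range_le (sum_range_firstPassageProb_le_one hp.le hq hpq · j)
  · rw [tsum_eq_single 0 fun n hn => ?_, firstPassageProb_zero_zero]
    obtain ⟨n, rfl⟩ := Nat.exists_eq_succ_of_ne_zero hn
    exact firstPassageProb_zero_succ n
  · intro j
    rw [(hs (j + 1)).tsum_eq_zero_add, firstPassageProb_succ_zero, zero_add]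
    simp only [firstPassageProb_succ_succ]
    rw [((hs j).mul_left q).tsum_add ((hs (j + 2)).mul_left p), tsum_mul_left, tsum_mul_left]

lemma tsum_firstPassageProb_mul_pow (m : ℕ) (t : ℝ) :
    ∑' n, firstPassageProb p q m n * t ^ ((n + m) / 2) =
      (q * t) ^ m * ∑' k : ℕ,
        (ascPochhammer ℝ k).eval ((m : ℝ) / 2) * (ascPochhammer ℝ k).eval (((m : ℝ) + 1) / 2) /
            ((ascPochhammer ℝ k).eval ((m : ℝ) + 1) * (k ! : ℝ)) * (4 * p * q * t) ^ k := by
  have hinj : Function.Injective fun k => m + 2 * k := fun a b h => by simp only at h; omega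
  rw [← hinj.tsum_eq, ← tsum_mul_left]
  · congr 1
    ext k
    rw [show (m + 2 * k + m) / 2 = m + k by omega, firstPassageProb_add_two_mul, ballotNumber,
      ascPochhammer_eval_two_mul]
    ring
  · intro n hn
    by_contra hrange
    refine hn ?_
    dsimp only
    rw [firstPassageProb_eq_zero fun k hk => hrange ⟨k, hk.symm⟩, zero_mul]

lemma summable_firstPassageProb_mul_pow (hp : 0 ≤ p) (hq : 0 ≤ q) (hpq : p + q = 1) {t : ℝ}
    (ht0 : 0 ≤ t) (ht1 : t ≤ 1) (j : ℕ) (e : ℕ → ℕ) :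
    Summable fun n => firstPassageProb p q j n * t ^ e n :=
  (summable_firstPassageProb hp hq hpq j).of_nonneg_of_le
    (fun n => mul_nonneg (firstPassageProb_nonneg hp hq j n) (pow_nonneg ht0 _))
    fun n => mul_le_of_le_one_right (firstPassageProb_nonneg hp hq j n) (pow_le_one₀ ht0 ht1)

end FirstPassageProb

def firstHitting (j n : ℕ) : Set (ℕ → ℝ) :=
  {x | (∀ k < n, ∑ i ∈ range k, x i ≠ -j) ∧ ∑ i ∈ range n, x i = -j}

lemma measurableSet_firstHitting (j n : ℕ) : MeasurableSet (firstHitting j n) := by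
  have hsum : ∀ k, Measurable fun x : ℕ → ℝ => ∑ i ∈ range k, x i := fun k => by fun_prop
  simp only [firstHitting, Set.ofPred_and, Set.ofPred_forall]
  exact .inter (.iInter fun k => .iInter fun _ =>
    (measurableSet_eq_fun (hsum k) measurable_const).compl)
    (measurableSet_eq_fun (hsum n) measurable_const)

@[simp] lemma firstHitting_zero_zero : firstHitting 0 0 = Set.univ := by
  simp [firstHitting]

@[simp] lemma firstHitting_succ_zero (j : ℕ) : firstHitting (j + 1) 0 = ∅ :=
  Set.eq_empty_of_forall_notMem fun x hx => by
    have := hx.2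
    simp only [range_zero, sum_empty, Nat.cast_add, Nat.cast_one] at this
    linarith [j.cast_nonneg (α := ℝ)]

@[simp] lemma firstHitting_zero_succ (n : ℕ) : firstHitting 0 (n + 1) = ∅ :=
  Set.eq_empty_of_forall_notMem fun _ hx => hx.1 0 n.succ_pos (by simp)

lemma pairwise_disjoint_firstHitting (j : ℕ) :
    Pairwise (Function.onFun Disjoint (firstHitting j)) := by
  intro n n' hne
  refine Set.disjoint_left.mpr fun x hx hx' => ?_
  rcases hne.lt_or_gt with h | h
  · exact hx'.1 n h hx.2
  · exact hx.1 n' h hx'.2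

lemma sInf_eq_of_mem_firstHitting {x : ℕ → ℝ} {j n : ℕ} (hj : 0 < j)
    (hx : x ∈ firstHitting j n) : sInf {k | 1 ≤ k ∧ ∑ i ∈ range k, x i = -j} = n := by
  refine IsLeast.csInf_eq ⟨⟨Nat.one_le_iff_ne_zero.mpr ?_, hx.2⟩, fun k hk => ?_⟩
  · rintro rfl
    have := hx.2
    simp only [range_zero, sum_empty, zero_eq_neg, Nat.cast_eq_zero] at this
    omega
  · by_contra! hkn
    exact hx.1 k hkn hk.2

lemma mem_firstHitting_succ_succ_iff {x : ℕ → ℝ} {j j' n : ℕ} (hj' : (j' : ℝ) = j + 1 + x 0) :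
    x ∈ firstHitting (j + 1) (n + 1) ↔ (fun i => x (i + 1)) ∈ firstHitting j' n := by
  have hshift : ∀ k, ∑ i ∈ range (k + 1), x i = x 0 + ∑ i ∈ range k, x (i + 1) := fun k => by
    rw [sum_range_succ', add_comm]
  simp only [firstHitting, Set.mem_ofPred_eq, hshift, hj']
  push_cast
  constructor
  · rintro ⟨hbefore, hlast⟩
    exact ⟨fun k hk heq => hbefore (k + 1) (by omega) (by rw [hshift]; linarith),
      by linarith⟩
  · rintro ⟨hbefore, hlast⟩
    refine ⟨fun k hk heq => ?_, by linarith⟩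
    cases k with
    | zero => simp only [range_zero, sum_empty] at heq; linarith
    | succ k => exact hbefore k (by omega) (by rw [hshift] at heq; linarith)

lemma firstHitting_succ_succ_inter (j n : ℕ) :
    firstHitting (j + 1) (n + 1) ∩ {x | x 0 ∈ ({1, -1} : Set ℝ)} =
      ({x | x 0 = -1} ∩ {x | (fun i => x (i + 1)) ∈ firstHitting j n}) ∪
        ({x | x 0 = 1} ∩ {x | (fun i => x (i + 1)) ∈ firstHitting (j + 2) n}) := by
  ext x
  simp only [Set.mem_inter_iff, Set.mem_union, Set.mem_insert_iff, Set.mem_singleton_iff,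
    Set.mem_ofPred_eq]
  rcases em (x 0 = 1) with h1 | h1
  · rw [mem_firstHitting_succ_succ_iff (j' := j + 2) (by push_cast; rw [h1]; ring)]
    norm_num [h1]
  rcases em (x 0 = -1) with h2 | h2
  · rw [mem_firstHitting_succ_succ_iff (j' := j) (by rw [h2]; ring)]
    norm_num [h2]
  · simp [h1, h2]

def stepLaw (p q : ℝ) : Measure ℝ :=
  ENNReal.ofReal p • Measure.dirac 1 + ENNReal.ofReal q • Measure.dirac (-1)

section Measure

variable {Ω : Type*} [MeasurableSpace Ω] {μ : Measure Ω} {p q : ℝ}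

lemma measure_eq_tsum_inter {s : Set Ω} {A : ℕ → Set Ω} (hA : μ (⋃ n, A n)ᶜ = 0)
    (hdisj : Pairwise (Function.onFun Disjoint A)) (hmeas : ∀ n, MeasurableSet (s ∩ A n)) :
    μ s = ∑' n, μ (s ∩ A n) := by
  rw [← measure_inter_conull hA, Set.inter_iUnion, measure_iUnion
    (fun _ _ h => (hdisj h).mono Set.inter_subset_right Set.inter_subset_right) hmeas]

lemma measure_eq_of_map_eq_stepLaw {X : Ω → ℝ} (hX : Measurable X)
    (hlaw : μ.map X = stepLaw p q) :
    μ (X ⁻¹' {1}) = ENNReal.ofReal p ∧ μ (X ⁻¹' {-1}) = ENNReal.ofReal q ∧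
      μ (X ⁻¹' {1, -1})ᶜ = 0 := by
  simp only [← Set.preimage_compl, ← Measure.map_apply hX (measurableSet_singleton _), hlaw,
    ← Measure.map_apply hX (measurableSet_insert.mpr (measurableSet_singleton _)).compl]
  norm_num [stepLaw]

lemma measurableSet_preimage_firstHitting {ξ : ℕ → Ω → ℝ} (hξ : ∀ i, Measurable (ξ i))
    (j n : ℕ) : MeasurableSet ((fun ω i => ξ i ω) ⁻¹' firstHitting j n) :=
  (measurableSet_firstHitting j n).preimage (measurable_pi_lambda _ hξ)

variable [IsProbabilityMeasure μ]

lemma measure_preimage_firstHitting (hp : 0 ≤ p) (hq : 0 ≤ q) {ξ : ℕ → Ω → ℝ}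
    (hξ : ∀ i, Measurable (ξ i)) (hind : iIndepFun ξ μ) (hlaw : ∀ i, μ.map (ξ i) = stepLaw p q)
    (j n : ℕ) :
    μ ((fun ω i => ξ i ω) ⁻¹' firstHitting j n) = ENNReal.ofReal (firstPassageProb p q j n) := by
  induction n generalizing j ξ with
  | zero => cases j <;> simp
  | succ n ih =>
    cases j with
    | zero => simp
    | succ j =>
    let tail : Ω → ℕ → ℝ := fun ω i => ξ (i + 1) ω
    have htail : ∀ j', μ (tail ⁻¹' firstHitting j' n) =
        ENNReal.ofReal (firstPassageProb p q j' n) :=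
      ih (fun i => hξ (i + 1)) (hind.precomp Nat.succ_injective) (fun i => hlaw (i + 1))
    have hfirst : IndepFun (ξ 0) tail μ :=
      (hind.indepFun_pi_of_ne hξ (a := fun _ : Unit => 0) (b := Nat.succ)
        fun _ l => (Nat.succ_ne_zero l).symm).comp (measurable_pi_apply ()) measurable_id
    obtain ⟨hup, hdown, hnull⟩ := measure_eq_of_map_eq_stepLaw (hξ 0) (hlaw 0)
    have hdisj : Disjoint (ξ 0 ⁻¹' {-1} ∩ tail ⁻¹' firstHitting j n)
        (ξ 0 ⁻¹' {1} ∩ tail ⁻¹' firstHitting (j + 2) n) :=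
      ((Set.disjoint_singleton.mpr (by norm_num)).preimage _).mono Set.inter_subset_left
        Set.inter_subset_left
    have hmeas : MeasurableSet (ξ 0 ⁻¹' {1} ∩ tail ⁻¹' firstHitting (j + 2) n) :=
      (hξ 0 (measurableSet_singleton _)).inter
        (measurableSet_preimage_firstHitting (fun i => hξ (i + 1)) _ _)
    have hsplit : (fun ω i => ξ i ω) ⁻¹' firstHitting (j + 1) (n + 1) ∩ ξ 0 ⁻¹' {1, -1} =
        (ξ 0 ⁻¹' {-1} ∩ tail ⁻¹' firstHitting j n) ∪
          (ξ 0 ⁻¹' {1} ∩ tail ⁻¹' firstHitting (j + 2) n) :=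
      congrArg ((fun ω i => ξ i ω) ⁻¹' ·) (firstHitting_succ_succ_inter j n)
    rw [← measure_inter_conull hnull, hsplit, measure_union hdisj hmeas,
      hfirst.measure_inter_preimage_eq_mul _ _ (measurableSet_singleton _)
        (measurableSet_firstHitting _ _),
      hfirst.measure_inter_preimage_eq_mul _ _ (measurableSet_singleton _)
        (measurableSet_firstHitting _ _),
      hup, hdown, htail, htail, firstPassageProb_succ_succ,
      ENNReal.ofReal_add (mul_nonneg hq (firstPassageProb_nonneg hp hq _ _))
        (mul_nonneg hp (firstPassageProb_nonneg hp hq _ _)),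
      ENNReal.ofReal_mul hq, ENNReal.ofReal_mul hp]

lemma measure_compl_iUnion_firstHitting (hp : 0 < p) (hle : p ≤ q) (hpq : p + q = 1)
    {ξ : ℕ → Ω → ℝ} (hξ : ∀ i, Measurable (ξ i)) (hind : iIndepFun ξ μ)
    (hlaw : ∀ i, μ.map (ξ i) = stepLaw p q) (j : ℕ) :
    μ (⋃ n, (fun ω i => ξ i ω) ⁻¹' firstHitting j n)ᶜ = 0 := by
  have hq : 0 ≤ q := by linarith
  have hmeas := measurableSet_preimage_firstHitting hξ j
  rw [prob_compl_eq_zero_iff (.iUnion hmeas),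
    measure_iUnion (fun n n' h => (pairwise_disjoint_firstHitting j h).preimage _) hmeas]
  simp_rw [measure_preimage_firstHitting hp.le hq hξ hind hlaw]
  rw [← ENNReal.ofReal_tsum_of_nonneg (firstPassageProb_nonneg hp.le hq j)
      (summable_firstPassageProb hp.le hq hpq j),
    (hasSum_firstPassageProb hp hle hpq j).tsum_eq, ENNReal.ofReal_one]

lemma measure_preimage_pi_Iic {Y : ℕ → Ω → ℝ} (hY : ∀ i, Measurable (Y i))
    (hind : iIndepFun Y μ) (hlaw : ∀ i, μ.map (Y i) = volume.restrict (Icc (0 : ℝ) 1))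
    {t : ℝ} (ht1 : t ≤ 1) (s : Finset ℕ) :
    μ ((fun ω i => Y i ω) ⁻¹' (s : Set ℕ).pi fun _ => Iic t) = ENNReal.ofReal t ^ s.card := by
  have := fun i => Measure.isProbabilityMeasure_map (μ := μ) (hY i).aemeasurable
  rw [← Measure.map_apply (measurable_pi_lambda _ hY)
      (.pi s.countable_toSet fun _ _ => measurableSet_Iic),
    hind.map_fun_eq_infinitePi_map hY]
  refine (Measure.infinitePi_pi (μ := fun i => μ.map (Y i)) fun _ _ => measurableSet_Iic).trans ?_
  have hIic : Iic t ∩ Icc 0 1 = Icc 0 t :=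
    Set.ext fun x => ⟨fun h => ⟨h.2.1, h.1⟩, fun h => ⟨h.2, h.1, h.2.trans ht1⟩⟩
  simp [hlaw, Measure.restrict_apply measurableSet_Iic, hIic]

lemma measure_preimage_firstHitting_inter_pi_Iic (hp : 0 ≤ p) (hq : 0 ≤ q) {ξ Y : ℕ → Ω → ℝ}
    (hξ : ∀ i, Measurable (ξ i)) (hY : ∀ i, Measurable (Y i)) (hind : iIndepFun (Sum.elim ξ Y) μ)
    (hξlaw : ∀ i, μ.map (ξ i) = stepLaw p q)
    (hYlaw : ∀ i, μ.map (Y i) = volume.restrict (Icc (0 : ℝ) 1))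
    {t : ℝ} (ht0 : 0 ≤ t) (ht1 : t ≤ 1) (j n N : ℕ) :
    μ ((fun ω i => ξ i ω) ⁻¹' firstHitting j n ∩
        (fun ω i => Y i ω) ⁻¹' (range N : Set ℕ).pi fun _ => Iic t) =
      ENNReal.ofReal (firstPassageProb p q j n * t ^ N) := by
  have hindξY : IndepFun (fun ω i => ξ i ω) (fun ω i => Y i ω) μ :=
    hind.indepFun_pi_of_ne (fun i => by cases i <;> simp [hξ, hY]) (a := Sum.inl) (b := Sum.inr)
      fun _ _ => Sum.inl_ne_inr
  rw [hindξY.measure_inter_preimage_eq_mul _ _ (measurableSet_firstHitting j n)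
      (.pi (Finset.countable_toSet _) fun _ _ => measurableSet_Iic),
    measure_preimage_firstHitting hp hq hξ (hind.precomp (g := Sum.inl) Sum.inl_injective) hξlaw,
    measure_preimage_pi_Iic hY (hind.precomp (g := Sum.inr) Sum.inr_injective) hYlaw ht1,
    card_range, ENNReal.ofReal_mul (firstPassageProb_nonneg hp hq j n), ENNReal.ofReal_pow ht0]

end Measure

end SimpleRandomWalk

end

open SimpleRandomWalk

/-- **Fitness of the strongest individual in the subcritical GMS(m) model.**
Let `m ≥ 1`, `p ∈ (0, 1/2]`, `q = 1-p`, `t ∈ [0,1)`.  Let `(ξ i)` be i.i.d. `±1` steps with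
`P(ξ i = 1) = p`, `P(ξ i = -1) = q`, `S n = ξ 0 + ⋯ + ξ (n-1)`,
`T = inf {n ≥ 1 : S n = -m}`, and `(Y i)` i.i.d. uniform on `[0,1]`, independent of `(ξ i)`.
With `Z = max of the first (T+m)/2 of the Y's`, one has
`P[Z ≤ t] = (qt)^m ∑_{k≥0} (m/2)_k ((m+1)/2)_k / ((m+1)_k k!) (4pqt)^k`. -/
theorem gms_strongest_fitness_cdf
    {Ω : Type*} [MeasurableSpace Ω] (μ : Measure Ω) [IsProbabilityMeasure μ]
    (m : ℕ) (hm : 1 ≤ m)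
    (p : ℝ) (hp0 : 0 < p) (hp : p ≤ 1 / 2) (q : ℝ) (hq : q = 1 - p)
    (ξ Y : ℕ → Ω → ℝ)
    (hξmeas : ∀ i, Measurable (ξ i)) (hYmeas : ∀ i, Measurable (Y i))
    (hindep : iIndepFun (Sum.elim ξ Y) μ)
    (hξdist : ∀ i, Measure.map (ξ i) μ =
      ENNReal.ofReal p • Measure.dirac (1 : ℝ) + ENNReal.ofReal q • Measure.dirac (-1 : ℝ))
    (hYdist : ∀ i, Measure.map (Y i) μ = volume.restrict (Set.Icc (0 : ℝ) 1))
    (S : ℕ → Ω → ℝ) (hS : ∀ n ω, S n ω = ∑ i ∈ Finset.range n, ξ i ω)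
    (T : Ω → ℕ) (hT : ∀ ω, T ω = sInf {n : ℕ | 1 ≤ n ∧ S n ω = -(m : ℝ)})
    (Z : Ω → ℝ) (hZ : ∀ ω, Z ω = ⨆ i ∈ Finset.range ((T ω + m) / 2), Y i ω)
    (t : ℝ) (ht0 : 0 ≤ t) (ht1 : t < 1) :
    μ {ω | Z ω ≤ t} =
      ENNReal.ofReal ((q * t) ^ m * ∑' k : ℕ,
        (ascPochhammer ℝ k).eval ((m : ℝ) / 2) * (ascPochhammer ℝ k).eval (((m : ℝ) + 1) / 2) /
            ((ascPochhammer ℝ k).eval ((m : ℝ) + 1) * (Nat.factorial k : ℝ)) *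
          (4 * p * q * t) ^ k) := by
  have hle : p ≤ q := by linarith
  have hpq : p + q = 1 := by linarith
  have hq0 : 0 ≤ q := by linarith
  let A n := (fun ω i => ξ i ω) ⁻¹' firstHitting m n
  have hslice : ∀ n, {ω | Z ω ≤ t} ∩ A n =
      A n ∩ (fun ω i => Y i ω) ⁻¹' (range ((n + m) / 2) : Set ℕ).pi fun _ => Iic t := fun n => by
    ext ω
    refine and_comm.trans (and_congr_right fun hω => ?_)
    have hTω : T ω = n := by simpa only [hT, hS] using sInf_eq_of_mem_firstHitting hm hω
    show Z ω ≤ t ↔ _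
    rw [hZ, hTω, Real.biSup_le_iff ht0]
    simp
  have hterm n := measure_preimage_firstHitting_inter_pi_Iic hp0.le hq0 hξmeas hYmeas hindep
    hξdist hYdist ht0 ht1.le m n ((n + m) / 2)
  rw [measure_eq_tsum_inter (measure_compl_iUnion_firstHitting hp0 hle hpq hξmeas
      (hindep.precomp (g := Sum.inl) Sum.inl_injective) hξdist m)
      (fun _ _ h => (pairwise_disjoint_firstHitting m h).preimage _)
      fun n => hslice n ▸ (measurableSet_preimage_firstHitting hξmeas m n).inter
        ((MeasurableSet.pi (countable_toSet _) fun _ _ => measurableSet_Iic).preimage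
          (measurable_pi_lambda _ hYmeas)),
    ← tsum_firstPassageProb_mul_pow, ENNReal.ofReal_tsum_of_nonneg
      (fun n => mul_nonneg (firstPassageProb_nonneg hp0.le hq0 m n) (by positivity))
      (summable_firstPassageProb_mul_pow hp0.le hq0 hpq ht0 ht1.le m _)]
  exact tsum_congr fun n => (congrArg μ (hslice n)).trans (hterm n)
end

section
/- Let m ≥ 1 be an integer, let p ∈ [0, 1/2] and q = 1 − p, and let t ∈ [0, 1). Then ∑_{j=0}^∞ (m/(m+2j)) · C(m+2j, m+j) · p^j q^{m+j} t^{m+j} = (qt)^m · ∑_{k=0}^∞ [(m/2)_k ((m+1)/2)_k / ((m+1)_k · k!)] (4pqt)^k, both series being absolutely convergent. -/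
lemma choose_le_two_pow' (n k : ℕ) : n.choose k ≤ 2 ^ n := by
  rcases le_or_gt k n with h | h
  · calc n.choose k ≤ ∑ i ∈ Finset.range (n+1), n.choose i :=
        Finset.single_le_sum (fun i _ => Nat.zero_le _) (Finset.mem_range.mpr (by omega))
      _ = 2 ^ n := Nat.sum_range_choose n
  · simp [Nat.choose_eq_zero_of_lt h]

lemma choose_rec (m k : ℕ) :
    ((m + 2*(k+1)).choose (m+k+1) : ℝ) * (((m:ℝ)+k+1) * ((k:ℝ)+1))
      = ((m + 2*k).choose (m+k) : ℝ) * (((m:ℝ)+2*k+1) * ((m:ℝ)+2*k+2)) := by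
  rw [Nat.cast_choose ℝ (by omega), Nat.cast_choose ℝ (by omega)]
  have e1 : m + 2*(k+1) - (m+k+1) = k+1 := by omega
  have e2 : m + 2*k - (m+k) = k := by omega
  rw [e1, e2]
  have e3 : m + 2*(k+1) = (m+2*k+1)+1 := by omega
  have e4 : m+k+1 = (m+k)+1 := by omega
  rw [e3, e4, Nat.factorial_succ, Nat.factorial_succ, Nat.factorial_succ, Nat.factorial_succ]
  have h1 : ((m+k).factorial : ℝ) ≠ 0 := by positivity
  have h2 : ((k).factorial : ℝ) ≠ 0 := by positivity
  have h3 : ((m+2*k).factorial : ℝ) ≠ 0 := by positivity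
  push_cast
  field_simp
  ring

lemma key' (m : ℕ) (k : ℕ) :
    (ascPochhammer ℝ k).eval ((m:ℝ)/2) * (ascPochhammer ℝ k).eval (((m:ℝ)+1)/2) *
        4^k * ((m:ℝ)+2*(k:ℝ))
      = (m:ℝ) * (Nat.choose (m+2*k) (m+k) : ℝ) *
          ((ascPochhammer ℝ k).eval ((m:ℝ)+1) * (k.factorial:ℝ)) := by
  induction k with
  | zero => simp
  | succ k ih =>
      have hch := choose_rec m k
      rw [ascPochhammer_succ_eval, ascPochhammer_succ_eval, ascPochhammer_succ_eval,
        Nat.factorial_succ, pow_succ]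
      simp only [show m + 2*(k+1) = m + 2*k + 2 from by ring,
        show m + (k+1) = m + k + 1 from by ring] at *
      push_cast
      linear_combination ((m:ℝ)+2*(k:ℝ)+1)*((m:ℝ)+2*(k:ℝ)+2)*ih -
        ((m:ℝ) * (ascPochhammer ℝ k).eval ((m:ℝ)+1) * (k.factorial:ℝ)) * hch

lemma key (m : ℕ) (hm : 1 ≤ m) (k : ℕ) :
    (ascPochhammer ℝ k).eval ((m:ℝ)/2) * (ascPochhammer ℝ k).eval (((m:ℝ)+1)/2) /
      ((ascPochhammer ℝ k).eval ((m:ℝ)+1) * (k.factorial:ℝ)) * 4^k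
    = (m:ℝ)/((m:ℝ)+2*(k:ℝ)) * (Nat.choose (m+2*k) (m+k) : ℝ) := by
  have hm0 : (0:ℝ) < m := by exact_mod_cast hm
  have hA : (0:ℝ) < (ascPochhammer ℝ k).eval ((m:ℝ)+1) :=
    ascPochhammer_pos k _ (by positivity)
  have hF : (0:ℝ) < (k.factorial : ℝ) := by positivity
  have hD : (0:ℝ) < (m:ℝ) + 2*(k:ℝ) := by positivity
  have h := key' m k
  field_simp
  linear_combination h

/-- For an integer `m ≥ 1`, `p ∈ [0,1/2]`, `q = 1-p` and `t ∈ [0,1)`,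
`∑_{j≥0} (m/(m+2j)) C(m+2j, m+j) p^j q^{m+j} t^{m+j}
  = (qt)^m ∑_{k≥0} (m/2)_k ((m+1)/2)_k / ((m+1)_k k!) (4pqt)^k`,
both series being absolutely convergent.  Here `(x)_k` is the rising factorial. -/
theorem gms_series_eq_hypergeometric (m : ℕ) (hm : 1 ≤ m)
    (p : ℝ) (hp0 : 0 ≤ p) (hp : p ≤ 1 / 2) (q : ℝ) (hq : q = 1 - p)
    (t : ℝ) (ht0 : 0 ≤ t) (ht1 : t < 1) :
    Summable (fun j : ℕ =>
        |((m : ℝ) / ((m : ℝ) + 2 * (j : ℝ))) * (Nat.choose (m + 2 * j) (m + j) : ℝ) *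
          p ^ j * q ^ (m + j) * t ^ (m + j)|) ∧
    Summable (fun k : ℕ =>
        |(ascPochhammer ℝ k).eval ((m : ℝ) / 2) * (ascPochhammer ℝ k).eval (((m : ℝ) + 1) / 2) /
            ((ascPochhammer ℝ k).eval ((m : ℝ) + 1) * (Nat.factorial k : ℝ)) *
          (4 * p * q * t) ^ k|) ∧
    (∑' j : ℕ,
        ((m : ℝ) / ((m : ℝ) + 2 * (j : ℝ))) * (Nat.choose (m + 2 * j) (m + j) : ℝ) *
          p ^ j * q ^ (m + j) * t ^ (m + j)) =
      (q * t) ^ m * ∑' k : ℕ,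
        (ascPochhammer ℝ k).eval ((m : ℝ) / 2) * (ascPochhammer ℝ k).eval (((m : ℝ) + 1) / 2) /
            ((ascPochhammer ℝ k).eval ((m : ℝ) + 1) * (Nat.factorial k : ℝ)) *
          (4 * p * q * t) ^ k := by
  have hq0 : 0 ≤ q := by rw [hq]; linarith
  have hm0 : (0:ℝ) < m := by exact_mod_cast hm
  -- abbreviations
  set L : ℕ → ℝ := fun j =>
    ((m : ℝ) / ((m : ℝ) + 2 * (j : ℝ))) * (Nat.choose (m + 2 * j) (m + j) : ℝ) *
      p ^ j * q ^ (m + j) * t ^ (m + j) with hL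
  set R : ℕ → ℝ := fun k =>
    (ascPochhammer ℝ k).eval ((m : ℝ) / 2) * (ascPochhammer ℝ k).eval (((m : ℝ) + 1) / 2) /
        ((ascPochhammer ℝ k).eval ((m : ℝ) + 1) * (Nat.factorial k : ℝ)) *
      (4 * p * q * t) ^ k with hR
  -- termwise form of R
  have hRval : ∀ k : ℕ, R k =
      ((m : ℝ) / ((m : ℝ) + 2 * (k : ℝ))) * (Nat.choose (m + 2 * k) (m + k) : ℝ) *
        (p * q * t) ^ k := by
    intro k
    have h4 : (4 * p * q * t) ^ k = 4 ^ k * (p * q * t) ^ k := by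
      rw [← mul_pow]; ring_nf
    rw [hR]
    simp only
    rw [h4, ← mul_assoc, key m hm k]
  -- termwise equality
  have hterm : ∀ j : ℕ, L j = (q * t) ^ m * R j := by
    intro j
    rw [hRval j, hL]
    simp only
    rw [pow_add, pow_add, mul_pow, mul_pow]
    ring
  -- nonnegativity of R terms
  have hRnn : ∀ k : ℕ, 0 ≤ R k := by
    intro k
    rw [hRval k]
    positivity
  -- 4pq ≤ 1
  have hpq : 4 * p * q ≤ 1 := by rw [hq]; nlinarith
  -- bound : R k ≤ 2^m * t^k
  have hRle : ∀ k : ℕ, R k ≤ (2:ℝ)^m * t ^ k := by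
    intro k
    rw [hRval k]
    have h1 : (m:ℝ) / ((m:ℝ) + 2 * k) ≤ 1 := by
      rw [div_le_one (by positivity)]
      have : (0:ℝ) ≤ (k:ℝ) := Nat.cast_nonneg k
      linarith
    have h2 : ((m + 2*k).choose (m+k) : ℝ) ≤ (2:ℝ)^m * 4^k := by
      have := choose_le_two_pow' (m + 2*k) (m+k)
      have hcast : ((m + 2*k).choose (m+k) : ℝ) ≤ (2:ℝ)^(m + 2*k) := by
        exact_mod_cast this
      calc ((m + 2*k).choose (m+k) : ℝ) ≤ (2:ℝ)^(m + 2*k) := hcast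
        _ = (2:ℝ)^m * 4^k := by
            rw [pow_add, pow_mul]; norm_num
    have h3 : (0:ℝ) ≤ (p * q * t) ^ k := by positivity
    calc (m:ℝ) / ((m:ℝ) + 2 * k) * ((m + 2*k).choose (m+k) : ℝ) * (p * q * t) ^ k
        ≤ 1 * ((2:ℝ)^m * 4^k) * (p * q * t) ^ k := by
          apply mul_le_mul (mul_le_mul h1 h2 (by positivity) (by norm_num)) le_rfl h3
          positivity
      _ = (2:ℝ)^m * (4 * p * q * t) ^ k := by
          rw [one_mul, mul_assoc, ← mul_pow]; ring_nf
      _ ≤ (2:ℝ)^m * t ^ k := by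
          apply mul_le_mul_of_nonneg_left _ (by positivity)
          apply pow_le_pow_left₀ (by positivity)
          nlinarith
  -- R summable
  have hRsum : Summable R := by
    apply Summable.of_nonneg_of_le hRnn hRle
    exact (summable_geometric_of_lt_one ht0 ht1).mul_left _
  have hRabs : Summable (fun k => |R k|) := by
    simpa [fun k => abs_of_nonneg (hRnn k)] using hRsum
  -- L summable
  have hLabs : Summable (fun j => |L j|) := by
    have : (fun j => |L j|) = fun j => (q * t) ^ m * |R j| := by
      funext j
      rw [hterm j, abs_mul, abs_of_nonneg (by positivity)]
    rw [this]
    exact hRabs.mul_left _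
  refine ⟨hLabs, hRabs, ?_⟩
  rw [tsum_congr hterm, tsum_mul_left]
end

section
/- Let m ≥ 1 be an integer, let p ∈ [0,1] and q = 1 − p. Let (ξ_i)_{i≥1} be i.i.d. random variables with P(ξ_i = 1) = p and P(ξ_i = −1) = q, let S_n = ξ_1 + ⋯ + ξ_n, and let T = inf{n ≥ 1 : S_n = −m} (with T = ∞ if the walk never reaches −m). Then for every integer k ≥ 1: if k ≥ m and k + m is even, P[T = k] = (m/k) · C(k, (k−m)/2) · p^{(k−m)/2} q^{(k+m)/2}, and otherwise P[T = k] = 0. -/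
/-!
On the almost sure event that every step is `±1`, the event `{T = k}` is the disjoint union of
the cylinders `{ξ i = ±1 for i < k}` whose sign pattern makes the walk reach `-m` for the first
time at step `k`. Such a pattern has `(k - m) / 2` up-steps, so by independence its cylinder has
probability `p ^ ((k - m) / 2) * q ^ ((k + m) / 2)`. The number `N k d` of patterns of length `k`
first reaching depth `d` at their end obeys the first-step recursion
`N (k + 1) (d + 1) = N k (d + 2) + N k d`, and the ballot formula `k * N k d = d * C(k, (k - d)/2)`
follows from it by induction, the step being two Pascal-type identities for binomials.
-/

open Finset

theorem Nat.sInf_setOf_eq_iff {p : ℕ → Prop} {k : ℕ} (hk : k ≠ 0) :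
    sInf {n | p n} = k ↔ p k ∧ ∀ n < k, ¬ p n := by
  by_cases h : ∃ n, p n
  · classical
    rw [Nat.sInf_def (s := {n | p n}) h, Nat.find_eq_iff]
    rfl
  · push Not at h
    simp [h, hk.symm]

theorem List.prod_map_ite_eq_pow_count {M : Type*} [CommMonoid M] (x y : M) (l : List Bool) :
    (l.map fun b => if b then x else y).prod = x ^ l.count true * y ^ l.count false := by
  induction l with
  | nil => simp
  | cons b l ih => cases b <;> simp [ih, pow_succ', mul_assoc, mul_left_comm]

theorem Finset.card_filter_ofFn_succ {α : Type*} [Fintype α] {k : ℕ} (P : List α → Prop)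
    [DecidablePred P] :
    #{f : Fin (k + 1) → α | P (List.ofFn f)} = ∑ a, #{g : Fin k → α | P (a :: List.ofFn g)} := by
  simp only [card_filter]
  rw [← (Fin.consEquiv fun _ => α).sum_comp, Fintype.sum_prod_type]
  simp [Fin.consEquiv]

namespace FirstPassage

def step (b : Bool) : ℝ := if b then 1 else -1

/-- `FirstHit d l`: the walk started at height `d` with steps `l` (`true` is `+1`, `false` is
`-1`) reaches `0` for the first time exactly at the end of `l`. -/
def FirstHit : ℕ → List Bool → Prop
  | 0, [] => True
  | 0, _ :: _ => False
  | _ + 1, [] => False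
  | d + 1, true :: l => FirstHit (d + 2) l
  | d + 1, false :: l => FirstHit d l

instance FirstHit.decidable : ∀ d l, Decidable (FirstHit d l)
  | 0, [] => isTrue trivial
  | 0, _ :: _ => isFalse id
  | _ + 1, [] => isFalse id
  | d + 1, true :: l => FirstHit.decidable (d + 2) l
  | d + 1, false :: l => FirstHit.decidable d l

theorem firstHit_iff {d : ℕ} {l : List Bool} {x : ℕ → ℝ}
    (hx : ∀ i (hi : i < l.length), x i = step l[i]) :
    FirstHit d l ↔ (d : ℝ) + ∑ i ∈ range l.length, x i = 0 ∧
      ∀ n < l.length, (d : ℝ) + ∑ i ∈ range n, x i ≠ 0 := by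
  induction l generalizing d x with
  | nil =>
    rcases d with _ | d
    · simp [FirstHit]
    · simp [FirstHit]
      positivity
  | cons b l ih =>
    rcases d with _ | d
    · exact iff_of_false id fun h => h.2 0 (by simp) (by simp)
    have hfirst : FirstHit (d + 1) (b :: l) ↔ FirstHit (if b then d + 2 else d) l := by
      cases b <;> rfl
    have hheight : ((if b then d + 2 else d : ℕ) : ℝ) = d + 1 + x 0 := by
      rw [hx 0 (by simp)]
      cases b <;> norm_num [step]
      ring
    have hshift (s : ℝ) : (d : ℝ) + 1 + x 0 + s = (d + 1 : ℕ) + (s + x 0) := by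
      push_cast
      ring
    rw [hfirst, ih (x := fun i => x (i + 1)) (fun i hi => hx (i + 1) (by simpa using hi)),
      hheight]
    simp only [List.length_cons, sum_range_succ', Nat.forall_lt_succ_left, sum_range_zero, hshift]
    exact and_congr_right fun _ => (and_iff_right (by positivity)).symm

theorem FirstHit.count_false_eq {d : ℕ} {l : List Bool} (h : FirstHit d l) :
    l.count false = l.count true + d := by
  induction l generalizing d with
  | nil => cases d <;> simp_all [FirstHit]
  | cons b l ih =>
    rcases d with _ | d
    · exact h.elim
    · cases b <;> simp [ih h] <;> omega

theorem FirstHit.length_eq {d : ℕ} {l : List Bool} (h : FirstHit d l) :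
    l.length = 2 * l.count true + d := by
  rw [← List.count_true_add_count_false, h.count_false_eq]
  ring

def firstHitCount (k d : ℕ) : ℕ := #{f : Fin k → Bool | FirstHit d (List.ofFn f)}

theorem firstHitCount_succ_zero (k : ℕ) : firstHitCount (k + 1) 0 = 0 := by
  rw [firstHitCount, card_filter_ofFn_succ]
  exact sum_eq_zero fun b _ => card_eq_zero.2 (filter_false_of_mem fun _ _ h => h)

theorem firstHitCount_succ_succ (k d : ℕ) :
    firstHitCount (k + 1) (d + 1) = firstHitCount k (d + 2) + firstHitCount k d := by
  rw [firstHitCount, card_filter_ofFn_succ]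
  simp [FirstHit, firstHitCount, add_comm]

theorem firstHitCount_eq_zero_of_lt {k d : ℕ} (h : k < d) : firstHitCount k d = 0 := by
  refine card_eq_zero.2 (filter_eq_empty_iff.2 fun f _ hf => ?_)
  have hlen := hf.length_eq
  rw [List.length_ofFn] at hlen
  omega

theorem firstHitCount_self (k : ℕ) : firstHitCount k k = 1 := by
  induction k with
  | zero => rfl
  | succ k ih => rw [firstHitCount_succ_succ, firstHitCount_eq_zero_of_lt (by omega), ih]

theorem mul_firstHitCount (a d : ℕ) :
    (2 * a + d) * firstHitCount (2 * a + d) d = d * (2 * a + d).choose a := by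
  induction a generalizing d with
  | zero => simp [firstHitCount_self]
  | succ a iha =>
    induction d with
    | zero => simp [show 2 * (a + 1) + 0 = (2 * a + 1) + 1 by ring, firstHitCount_succ_zero]
    | succ d ihd =>
      set K := 2 * a + d + 2 with hK
      have hup : K * firstHitCount K (d + 2) = (d + 2) * K.choose a := by
        rw [hK, show 2 * a + d + 2 = 2 * a + (d + 2) by ring]
        exact iha (d + 2)
      have hdown : K * firstHitCount K d = d * K.choose (a + 1) := by
        rw [hK, show 2 * a + d + 2 = 2 * (a + 1) + d by ring]
        exact ihd
      have hpascal₁ := Nat.add_one_mul_choose_eq K a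
      have hpascal₂ := Nat.choose_mul_succ_eq K (a + 1)
      rw [show K + 1 - (a + 1) = a + d + 2 by omega] at hpascal₂
      rw [show 2 * (a + 1) + (d + 1) = K + 1 by omega, firstHitCount_succ_succ]
      refine Nat.eq_of_mul_eq_mul_left (show 0 < K by omega) ?_
      linear_combination (K + 1) * hup + (K + 1) * hdown + (d + 2) * hpascal₁ + d * hpascal₂

theorem sum_prod_firstHit (x y : ℝ) {d : ℕ} (hd : 1 ≤ d) (k : ℕ) :
    ∑ f : Fin k → Bool with FirstHit d (List.ofFn f), ∏ i, (if f i then x else y) =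
      if d ≤ k ∧ Even (k + d) then
        (d / k : ℝ) * k.choose ((k - d) / 2) * x ^ ((k - d) / 2) * y ^ ((k + d) / 2)
      else 0 := by
  have hprod (f : Fin k → Bool) : ∏ i, (if f i then x else y) =
      x ^ (List.ofFn f).count true * y ^ (List.ofFn f).count false := by
    rw [← List.prod_map_ite_eq_pow_count, List.map_ofFn, List.prod_ofFn]
    rfl
  split_ifs with h
  · obtain ⟨a, rfl⟩ : ∃ a, k = 2 * a + d := by
      obtain ⟨hdk, c, hc⟩ := h
      exact ⟨c - d, by omega⟩
    have hweight : ∀ f ∈ ({f | FirstHit d (List.ofFn f)} : Finset (Fin (2 * a + d) → Bool)),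
        ∏ i, (if f i then x else y) = x ^ a * y ^ (a + d) := by
      intro f hf
      have hhit := (mem_filter.1 hf).2
      have hlen := hhit.length_eq
      rw [List.length_ofFn] at hlen
      rw [hprod, hhit.count_false_eq, show (List.ofFn f).count true = a by omega]
    have hballot : ((2 * a + d : ℕ) : ℝ) * firstHitCount (2 * a + d) d =
        d * (2 * a + d).choose a := by
      exact_mod_cast mul_firstHitCount a d
    rw [sum_congr rfl hweight, sum_const, ← firstHitCount, nsmul_eq_mul,
      show (2 * a + d - d) / 2 = a by omega, show (2 * a + d + d) / 2 = a + d by omega]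
    field_simp
    linear_combination x ^ a * y ^ (a + d) * hballot
  · refine sum_eq_zero fun f hf => absurd ?_ h
    have hlen := (mem_filter.1 hf).2.length_eq
    rw [List.length_ofFn] at hlen
    exact ⟨by omega, ⟨(List.ofFn f).count true + d, by omega⟩⟩

open MeasureTheory ProbabilityTheory
open scoped ENNReal

section SignCylinder

variable {Ω : Type*} {ξ : ℕ → Ω → ℝ} {k : ℕ}

def signCylinder (ξ : ℕ → Ω → ℝ) {k : ℕ} (f : Fin k → Bool) : Set Ω :=
  ⋂ i : Fin k, ξ i ⁻¹' {step (f i)}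

@[simp]
theorem mem_signCylinder {f : Fin k → Bool} {ω : Ω} :
    ω ∈ signCylinder ξ f ↔ ∀ i : Fin k, ξ i ω = step (f i) := by
  simp [signCylinder]

theorem step_injective : Function.Injective step := by
  intro b c h
  cases b <;> cases c <;> first | rfl | norm_num [step] at h

theorem disjoint_signCylinder {f g : Fin k → Bool} (h : f ≠ g) :
    Disjoint (signCylinder ξ f) (signCylinder ξ g) := by
  refine Set.disjoint_left.2 fun ω hf hg => h (funext fun i => step_injective ?_)
  rw [← mem_signCylinder.1 hf i, ← mem_signCylinder.1 hg i]

theorem sInf_hitting_eq_iff_firstHit {m : ℕ} (hm : 1 ≤ m) (hk : k ≠ 0) {f : Fin k → Bool}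
    {ω : Ω} (hω : ω ∈ signCylinder ξ f) :
    sInf {n | 1 ≤ n ∧ ∑ i ∈ range n, ξ i ω = -m} = k ↔ FirstHit m (List.ofFn f) := by
  have hhit (n : ℕ) :
      (1 ≤ n ∧ ∑ i ∈ range n, ξ i ω = -m) ↔ (m : ℝ) + ∑ i ∈ range n, ξ i ω = 0 := by
    rcases n with _ | n
    · simp only [range_zero, sum_empty, add_zero]
      norm_cast
      omega
    · rw [and_iff_right (Nat.le_add_left 1 n), eq_neg_iff_add_eq_zero, add_comm]
  simp only [hhit, Nat.sInf_setOf_eq_iff hk]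
  rw [firstHit_iff (x := fun i => ξ i ω), List.length_ofFn]
  intro i hi
  rw [List.getElem_ofFn]
  exact mem_signCylinder.1 hω ⟨i, by simpa using hi⟩

variable [MeasurableSpace Ω] {μ : Measure Ω}

theorem measurableSet_signCylinder (hξ : ∀ i, Measurable (ξ i)) (f : Fin k → Bool) :
    MeasurableSet (signCylinder ξ f) :=
  MeasurableSet.iInter fun i => hξ i (measurableSet_singleton _)

theorem ae_exists_mem_signCylinder {a b : ℝ≥0∞} (hξ : ∀ i, Measurable (ξ i))
    (hdist : ∀ i, μ.map (ξ i) = a • Measure.dirac 1 + b • Measure.dirac (-1)) (k : ℕ) :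
    ∀ᵐ ω ∂μ, ∃ f : Fin k → Bool, ω ∈ signCylinder ξ f := by
  have hsign (i : ℕ) : ∀ᵐ ω ∂μ, ξ i ω = 1 ∨ ξ i ω = -1 := by
    have hmeas : MeasurableSet {x : ℝ | x = 1 ∨ x = -1} :=
      (measurableSet_singleton _).union (measurableSet_singleton _)
    rw [← ae_map_iff (hξ i).aemeasurable hmeas, hdist, ae_add_measure_iff]
    exact ⟨Measure.ae_smul_measure (by simp) a, Measure.ae_smul_measure (by simp) b⟩
  filter_upwards [ae_all_iff.2 hsign] with ω hω
  refine ⟨fun i => decide (ξ i ω = 1), mem_signCylinder.2 fun i => ?_⟩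
  rcases hω i with h | h <;> simp [step, h]

theorem measure_signCylinder {a b : ℝ≥0∞} (hξ : ∀ i, Measurable (ξ i)) (hindep : iIndepFun ξ μ)
    (hdist : ∀ i, μ.map (ξ i) = a • Measure.dirac 1 + b • Measure.dirac (-1))
    (f : Fin k → Bool) :
    μ (signCylinder ξ f) = ∏ i, if f i then a else b := by
  have hpoint (i : Fin k) : μ (ξ i ⁻¹' {step (f i)}) = if f i then a else b := by
    rw [← Measure.map_apply (hξ i) (measurableSet_singleton _), hdist]
    cases f i <;> norm_num [step, Pi.single_apply]
  have hprod := (hindep.precomp Fin.val_injective).measure_inter_preimage_eq_mul univ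
    (sets := fun i => {step (f i)}) fun _ _ => measurableSet_singleton _
  simp only [mem_univ, Set.iInter_true] at hprod
  rw [signCylinder, hprod]
  exact prod_congr rfl fun i _ => hpoint i

theorem measure_eq_sum_signCylinder (hξ : ∀ i, Measurable (ξ i))
    (hae : ∀ᵐ ω ∂μ, ∃ f : Fin k → Bool, ω ∈ signCylinder ξ f) {E : Set Ω}
    (P : (Fin k → Bool) → Prop) [DecidablePred P]
    (hE : ∀ f, ∀ ω ∈ signCylinder ξ f, ω ∈ E ↔ P f) :
    μ E = ∑ f with P f, μ (signCylinder ξ f) := by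
  have hcover : E =ᵐ[μ] ⋃ f ∈ ({f | P f} : Finset (Fin k → Bool)), signCylinder ξ f := by
    filter_upwards [hae] with ω ⟨f, hf⟩
    refine propext (?_ : ω ∈ E ↔ ω ∈ ⋃ g ∈ ({f | P f} : Finset (Fin k → Bool)), signCylinder ξ g)
    simp only [Set.mem_iUnion, mem_filter, mem_univ, true_and, exists_prop]
    exact ⟨fun hω => ⟨f, (hE f ω hf).1 hω, hf⟩, fun ⟨g, hg, hωg⟩ => (hE g ω hωg).2 hg⟩
  rw [measure_congr hcover, measure_biUnion_finset
    (fun f _ g _ h => disjoint_signCylinder h) fun f _ => measurableSet_signCylinder hξ f]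

end SignCylinder

end FirstPassage

open MeasureTheory ProbabilityTheory FirstPassage

theorem first_passage_time_distribution_general
    {Ω : Type*} [MeasurableSpace Ω] (μ : Measure Ω)
    (m : ℕ) (hm : 1 ≤ m)
    (p : ℝ) (hp0 : 0 ≤ p) (hp1 : p ≤ 1) (q : ℝ) (hq : q = 1 - p)
    (ξ : ℕ → Ω → ℝ)
    (hξmeas : ∀ i, Measurable (ξ i))
    (hindep : iIndepFun ξ μ)
    (hξdist : ∀ i, Measure.map (ξ i) μ =
      ENNReal.ofReal p • Measure.dirac (1 : ℝ) + ENNReal.ofReal q • Measure.dirac (-1 : ℝ))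
    (S : ℕ → Ω → ℝ) (hS : ∀ n ω, S n ω = ∑ i ∈ Finset.range n, ξ i ω)
    (T : Ω → ℕ) (hT : ∀ ω, T ω = sInf {n : ℕ | 1 ≤ n ∧ S n ω = -(m : ℝ)})
    (k : ℕ) (hk : 1 ≤ k) :
    (m ≤ k ∧ Even (k + m) →
      μ {ω | T ω = k} =
        ENNReal.ofReal (((m : ℝ) / (k : ℝ)) * (Nat.choose k ((k - m) / 2) : ℝ) *
          p ^ ((k - m) / 2) * q ^ ((k + m) / 2))) ∧
    (¬ (m ≤ k ∧ Even (k + m)) → μ {ω | T ω = k} = 0) := by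
  have hq0 : 0 ≤ q := by linarith
  have hweight_nonneg (f : Fin k → Bool) : 0 ≤ ∏ i, if f i then p else q :=
    prod_nonneg fun i _ => by split_ifs <;> assumption
  have hcylinder (f : Fin k → Bool) :
      μ (signCylinder ξ f) = ENNReal.ofReal (∏ i, if f i then p else q) := by
    rw [measure_signCylinder hξmeas hindep hξdist,
      ENNReal.ofReal_prod_of_nonneg fun i _ => by split_ifs <;> assumption]
    exact prod_congr rfl fun i _ => by split_ifs <;> rfl
  have hlaw : μ {ω | T ω = k} = ENNReal.ofReal (if m ≤ k ∧ Even (k + m) then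
      (m / k : ℝ) * k.choose ((k - m) / 2) * p ^ ((k - m) / 2) * q ^ ((k + m) / 2) else 0) := by
    rw [← sum_prod_firstHit p q hm k, ENNReal.ofReal_sum_of_nonneg fun f _ => hweight_nonneg f]
    simp only [← hcylinder]
    refine measure_eq_sum_signCylinder hξmeas (ae_exists_mem_signCylinder hξmeas hξdist k) _
      fun f ω hω => ?_
    simp only [Set.mem_ofPred_eq, hT, hS]
    exact sInf_hitting_eq_iff_firstHit hm (by omega) hω
  exact ⟨fun h => by rw [hlaw, if_pos h], fun h => by rw [hlaw, if_neg h, ENNReal.ofReal_zero]⟩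

/-- **First passage time distribution.** Let `m ≥ 1`, `p ∈ [0,1]`, `q = 1-p`, `(ξ i)` i.i.d.
with `P(ξ i = 1) = p`, `P(ξ i = -1) = q`, `S n = ξ 0 + ⋯ + ξ (n-1)` and
`T = inf {n ≥ 1 : S n = -m}`.  Then for every `k ≥ 1`: if `k ≥ m` and `k + m` is even,
`P[T = k] = (m/k) C(k, (k-m)/2) p^{(k-m)/2} q^{(k+m)/2}`, and otherwise `P[T = k] = 0`. -/
theorem first_passage_time_distribution
    {Ω : Type*} [MeasurableSpace Ω] (μ : Measure Ω) [IsProbabilityMeasure μ]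
    (m : ℕ) (hm : 1 ≤ m)
    (p : ℝ) (hp0 : 0 ≤ p) (hp1 : p ≤ 1) (q : ℝ) (hq : q = 1 - p)
    (ξ : ℕ → Ω → ℝ)
    (hξmeas : ∀ i, Measurable (ξ i))
    (hindep : iIndepFun ξ μ)
    (hξdist : ∀ i, Measure.map (ξ i) μ =
      ENNReal.ofReal p • Measure.dirac (1 : ℝ) + ENNReal.ofReal q • Measure.dirac (-1 : ℝ))
    (S : ℕ → Ω → ℝ) (hS : ∀ n ω, S n ω = ∑ i ∈ Finset.range n, ξ i ω)
    (T : Ω → ℕ) (hT : ∀ ω, T ω = sInf {n : ℕ | 1 ≤ n ∧ S n ω = -(m : ℝ)})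
    (k : ℕ) (hk : 1 ≤ k) :
    (m ≤ k ∧ Even (k + m) →
      μ {ω | T ω = k} =
        ENNReal.ofReal (((m : ℝ) / (k : ℝ)) * (Nat.choose k ((k - m) / 2) : ℝ) *
          p ^ ((k - m) / 2) * q ^ ((k + m) / 2))) ∧
    (¬ (m ≤ k ∧ Even (k + m)) → μ {ω | T ω = k} = 0) :=
  first_passage_time_distribution_general μ m hm p hp0 hp1 q hq ξ hξmeas hindep hξdist S hS T hT k
    hk
end

section
/- Let m ≥ 1 be an integer. Then ∑_{j=0}^∞ (m/(m+2j)) · C(m+2j, m+j) · 2^{−(m+2j)} / (m+j+1) = 2/((m+1)(m+2)). -/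
/-!
`firstPassage m j` is the probability that a simple symmetric random walk first reaches level `m`
at step `m + 2 j`. Its generating function `∑ j, firstPassage m j * t ^ (m + j)` equals
`q ^ m` with `q = 1 - √(1 - t)`: for `m = 1` this is the binomial series of `√(1 - t)`, and the
first-step decomposition of the walk gives the recurrence `G (m + 2) = 2 G (m + 1) - t G m`,
which `q ^ m` satisfies because `q ^ 2 = 2 q - t`. Writing `1 / (m + j + 1) = ∫₀¹ t ^ (m + j) dt`
and integrating termwise, the series becomes `∫₀¹ (1 - √(1 - t)) ^ m dt`; the substitution
`t = 1 - (1 - u) ^ 2` turns this into `∫₀¹ 2 u ^ m (1 - u) du = 2 / ((m + 1) (m + 2))`.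
-/

open Real MeasureTheory Set

theorem Ring.choose_succ_right_eq {K : Type*} [Field K] [CharZero K] (a : K) (k : ℕ) :
    Ring.choose a (k + 1) * (k + 1) = Ring.choose a k * (a - k) := by
  simp only [Ring.choose_eq_smul, descPochhammer_succ_right, Polynomial.smeval_mul, smul_eq_mul,
    Polynomial.smeval_sub, Polynomial.smeval_X, Polynomial.smeval_natCast, pow_one, pow_zero,
    nsmul_eq_mul, mul_one, Nat.factorial_succ, Nat.cast_mul, Nat.cast_add, Nat.cast_one,
    mul_inv_rev]
  field_simp

theorem Real.hasSum_sqrt_one_sub {t : ℝ} (ht : |t| < 1) :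
    HasSum (fun n => Ring.choose (1 / 2 : ℝ) n * (-t) ^ n) √(1 - t) := by
  have := (one_add_rpow_hasFPowerSeriesOnBall_zero (a := 1 / 2)).hasSum (y := -t)
    (by rw [Metric.mem_eball, edist_zero_right, enorm_neg, enorm_eq_ofReal_abs]; simpa using ht)
  simp only [binomialSeries_apply, List.ofFn_const, List.prod_replicate, smul_eq_mul,
    zero_add] at this
  simpa [sqrt_eq_rpow, sub_eq_add_neg] using this

theorem integral_one_sub_sqrt_one_sub_pow (m : ℕ) :
    ∫ t in (0 : ℝ)..1, (1 - √(1 - t)) ^ m = 2 / ((m + 1) * (m + 2)) := by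
  have hsub : ∫ u in (0 : ℝ)..1, (1 - √((1 - u) ^ 2)) ^ m * (2 * (1 - u)) =
      ∫ t in (0 : ℝ)..1, (1 - √(1 - t)) ^ m := by
    have := intervalIntegral.integral_comp_mul_deriv (a := 0) (b := 1)
      (f := fun u => 1 - (1 - u) ^ 2) (f' := fun u => 2 * (1 - u))
      (g := fun t => (1 - √(1 - t)) ^ m)
      (fun u _ => by simpa using ((hasDerivAt_id u).const_sub 1).pow 2 |>.const_sub 1)
      (by fun_prop) (by fun_prop)
    norm_num at this
    exact this
  rw [← hsub, intervalIntegral.integral_congr (g := fun u => 2 * u ^ m - 2 * u ^ (m + 1))]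
  · rw [intervalIntegral.integral_sub, intervalIntegral.integral_const_mul,
      intervalIntegral.integral_const_mul, integral_pow, integral_pow]
    · push_cast
      field_simp
      ring
    all_goals exact (continuous_const.mul (continuous_pow _)).intervalIntegrable _ _
  · intro u hu
    rw [uIcc_of_le zero_le_one] at hu
    simp only [sqrt_sq (sub_nonneg.2 hu.2), sub_sub_cancel]
    ring

/-- `firstPassage 0` is identically zero (`0 / 0 = 0` at `j = 0`), although the walk starts at
level `0`. -/
noncomputable def firstPassage (m j : ℕ) : ℝ :=
  m / (m + 2 * j) * (m + 2 * j).choose j / 2 ^ (m + 2 * j)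

lemma firstPassage_nonneg (m j : ℕ) : 0 ≤ firstPassage m j := by
  unfold firstPassage
  positivity

lemma firstPassage_zero_left (j : ℕ) : firstPassage 0 j = 0 := by
  simp [firstPassage]

lemma firstPassage_zero_right {m : ℕ} (hm : m ≠ 0) : firstPassage m 0 = (2 ^ m)⁻¹ := by
  simp [firstPassage, hm]

lemma firstPassage_le (m j : ℕ) : firstPassage m j ≤ m / (m + 2 * j) := by
  unfold firstPassage
  rw [mul_div_assoc]
  refine mul_le_of_le_one_right (by positivity) ?_
  rw [div_le_one (by positivity)]
  exact_mod_cast Nat.choose_le_two_pow _ _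

lemma two_mul_firstPassage_succ_succ (m j : ℕ) :
    2 * firstPassage (m + 1) (j + 1) = firstPassage m (j + 1) + firstPassage (m + 2) j := by
  have hA : ((m + 2 * j + 3).choose (j + 1) : ℝ) =
      (m + 2 * j + 3) / (j + 1) * (m + 2 * j + 2).choose j := by
    rw [div_mul_eq_mul_div, eq_div_iff (by positivity)]
    exact_mod_cast (Nat.add_one_mul_choose_eq (m + 2 * j + 2) j).symm
  have hB : ((m + 2 * j + 2).choose (j + 1) : ℝ) =
      (m + j + 2) / (j + 1) * (m + 2 * j + 2).choose j := by
    have := Nat.choose_succ_right_eq (m + 2 * j + 2) j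
    rw [show m + 2 * j + 2 - j = m + j + 2 by omega, mul_comm _ (m + j + 2)] at this
    rw [div_mul_eq_mul_div, eq_div_iff (by positivity)]
    exact_mod_cast this
  simp only [firstPassage, show m + 1 + 2 * (j + 1) = m + 2 * j + 3 by ring,
    show m + 2 * (j + 1) = m + 2 * j + 2 by ring, show m + 2 + 2 * j = m + 2 * j + 2 by ring,
    hA, hB]
  push_cast
  rw [pow_succ]
  field_simp
  ring

lemma firstPassage_one_succ (j : ℕ) :
    firstPassage 1 (j + 1) * (2 * j + 4) = firstPassage 1 j * (2 * j + 1) := by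
  have hA : ((2 * j + 3).choose (j + 1) : ℝ) = (2 * j + 3) / (j + 1) * (2 * j + 2).choose j := by
    rw [div_mul_eq_mul_div, eq_div_iff (by positivity)]
    exact_mod_cast (Nat.add_one_mul_choose_eq (2 * j + 2) j).symm
  have hB : ((2 * j + 2).choose j : ℝ) = (2 * j + 2) / (j + 2) * (2 * j + 1).choose j := by
    have := Nat.choose_mul_succ_eq (2 * j + 1) j
    rw [show 2 * j + 1 + 1 - j = j + 2 by omega, show 2 * j + 1 + 1 = 2 * j + 2 by omega] at this
    rw [div_mul_eq_mul_div, eq_div_iff (by positivity)]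
    exact_mod_cast this.symm.trans (mul_comm _ _)
  simp only [firstPassage, show 1 + 2 * (j + 1) = 2 * j + 3 by ring,
    show 1 + 2 * j = 2 * j + 1 by ring, hA, hB]
  rw [show (2 : ℝ) ^ (2 * j + 3) = 2 ^ (2 * j + 1) * 4 by ring]
  push_cast
  field_simp
  ring

lemma ring_choose_half_succ (j : ℕ) :
    Ring.choose (1 / 2 : ℝ) (j + 1) = (-1) ^ j * firstPassage 1 j := by
  induction j with
  | zero => simp [firstPassage_zero_right]
  | succ j ih =>
    have h := Ring.choose_succ_right_eq (1 / 2 : ℝ) (j + 1)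
    rw [ih] at h
    have h' := firstPassage_one_succ j
    push_cast at h h'
    rw [pow_succ]
    apply mul_right_cancel₀ (by positivity : (j : ℝ) + 1 + 1 ≠ 0)
    linear_combination h + (-1) ^ j / 2 * h'

lemma hasSum_firstPassage_one {t : ℝ} (ht : |t| < 1) :
    HasSum (fun j => firstPassage 1 j * t ^ (1 + j)) (1 - √(1 - t)) := by
  have h := ((hasSum_nat_add_iff' 1).mpr (hasSum_sqrt_one_sub ht)).neg
  rw [Finset.sum_range_one, pow_zero, Ring.choose_zero_right, mul_one, neg_sub] at h
  refine h.congr_fun fun j => ?_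
  have hsign : (-1 : ℝ) ^ j * (-1) ^ (j + 1) = -1 := by
    rw [← pow_add]
    exact Odd.neg_one_pow ⟨j, by ring⟩
  rw [ring_choose_half_succ, neg_pow t, add_comm 1 j]
  linear_combination (firstPassage 1 j * t ^ (j + 1)) * hsign

lemma HasSum.firstPassage_add_two {m : ℕ} {t a b : ℝ}
    (ha : HasSum (fun j => firstPassage m j * t ^ (m + j)) a)
    (hb : HasSum (fun j => firstPassage (m + 1) j * t ^ (m + 1 + j)) b) :
    HasSum (fun j => firstPassage (m + 2) j * t ^ (m + 2 + j))
      (2 * (b - firstPassage (m + 1) 0 * t ^ (m + 1)) - t * (a - firstPassage m 0 * t ^ m)) := by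
  have ha' := (hasSum_nat_add_iff' 1).mpr ha
  have hb' := (hasSum_nat_add_iff' 1).mpr hb
  simp only [Finset.sum_range_one, add_zero] at ha' hb'
  refine ((hb'.mul_left 2).sub (ha'.mul_left t)).congr_fun fun j => ?_
  linear_combination (-t ^ (m + 2 + j)) * two_mul_firstPassage_succ_succ m j

theorem hasSum_firstPassage_mul_pow {m : ℕ} (hm : 1 ≤ m) {t : ℝ} (ht : |t| < 1) :
    HasSum (fun j => firstPassage m j * t ^ (m + j)) ((1 - √(1 - t)) ^ m) := by
  set q := 1 - √(1 - t)
  have hq : q ^ 2 = 2 * q - t := by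
    have := sq_sqrt (show 0 ≤ 1 - t by linarith [le_abs_self t])
    linear_combination this
  suffices ∀ k, HasSum (fun j => firstPassage (k + 1) j * t ^ (k + 1 + j)) (q ^ (k + 1)) ∧
      HasSum (fun j => firstPassage (k + 2) j * t ^ (k + 2 + j)) (q ^ (k + 2)) by
    obtain ⟨k, rfl⟩ := Nat.exists_eq_add_of_le' hm
    exact (this k).1
  intro k
  induction k with
  | zero =>
    have h1 : HasSum (fun j => firstPassage (0 + 1) j * t ^ (0 + 1 + j)) q :=
      hasSum_firstPassage_one ht
    have h0 : HasSum (fun j => firstPassage 0 j * t ^ (0 + j)) 0 := by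
      simp [firstPassage_zero_left]
    refine ⟨by simpa using h1, ?_⟩
    convert h0.firstPassage_add_two h1 using 2
    simp only [zero_add, firstPassage_zero_left, firstPassage_zero_right one_ne_zero]
    linear_combination hq
  | succ k ih =>
    refine ⟨ih.2, ?_⟩
    convert ih.1.firstPassage_add_two ih.2 using 2
    rw [firstPassage_zero_right (by omega), firstPassage_zero_right (by omega)]
    linear_combination q ^ (k + 1) * hq

lemma integral_firstPassage_mul_pow (m j : ℕ) :
    ∫ t in (0 : ℝ)..1, firstPassage m j * t ^ (m + j) = firstPassage m j / (m + j + 1) := by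
  simp [integral_pow, div_eq_mul_inv]

lemma firstPassage_div_le {m : ℕ} (hm : 1 ≤ m) (j : ℕ) :
    firstPassage m j / (m + j + 1) ≤ m / (j + 1) ^ 2 := by
  have hm' : (1 : ℝ) ≤ m := by exact_mod_cast hm
  calc firstPassage m j / (m + j + 1) ≤ m / (m + 2 * j) / (m + j + 1) := by
        gcongr
        exact firstPassage_le m j
    _ ≤ m / (j + 1) ^ 2 := by
        rw [div_div]
        gcongr
        nlinarith

lemma summable_firstPassage_div {m : ℕ} (hm : 1 ≤ m) :
    Summable (fun j => firstPassage m j / (m + j + 1)) := by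
  have hsq : Summable (fun j : ℕ => (m : ℝ) / (j + 1) ^ 2) := by
    have := (summable_nat_add_iff 1).mpr (summable_one_div_nat_pow.mpr one_lt_two)
    simpa [div_eq_mul_inv] using this.mul_left (m : ℝ)
  exact hsq.of_nonneg_of_le (fun j => by have := firstPassage_nonneg m j; positivity)
    (firstPassage_div_le hm)

theorem hasSum_firstPassage_div {m : ℕ} (hm : 1 ≤ m) :
    HasSum (fun j => firstPassage m j / (m + j + 1)) (2 / ((m + 1) * (m + 2))) := by
  rw [← integral_one_sub_sqrt_one_sub_pow, intervalIntegral.integral_of_le zero_le_one,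
    integral_Ioc_eq_integral_Ioo]
  have hF_int (j : ℕ) :
      IntegrableOn (fun t : ℝ => firstPassage m j * t ^ (m + j)) (Ioo 0 1) :=
    (by fun_prop : Continuous _).integrableOn_Icc.mono_set Ioo_subset_Icc_self
  have hF_eq (j : ℕ) : ∫ t in Ioo (0 : ℝ) 1, firstPassage m j * t ^ (m + j) =
      firstPassage m j / (m + j + 1) := by
    rw [← integral_Ioc_eq_integral_Ioo, ← intervalIntegral.integral_of_le zero_le_one,
      integral_firstPassage_mul_pow]
  have hF_norm (j : ℕ) : ∫ t in Ioo (0 : ℝ) 1, ‖firstPassage m j * t ^ (m + j)‖ =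
      firstPassage m j / (m + j + 1) := by
    rw [← hF_eq]
    refine setIntegral_congr_fun measurableSet_Ioo fun t ht => norm_of_nonneg ?_
    have := firstPassage_nonneg m j
    have := ht.1.le
    positivity
  have h := hasSum_integral_of_summable_integral_norm hF_int
    (by simpa only [hF_norm] using summable_firstPassage_div hm)
  simp only [hF_eq] at h
  rwa [setIntegral_congr_fun measurableSet_Ioo fun t ht =>
    (hasSum_firstPassage_mul_pow hm (abs_lt.2 ⟨by linarith [ht.1], ht.2⟩)).tsum_eq] at h

/-- For every integer `m ≥ 1`,
`∑_{j≥0} (m/(m+2j)) · C(m+2j, m+j) · 2^{-(m+2j)} / (m+j+1) = 2/((m+1)(m+2))`. -/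
theorem first_passage_series_half (m : ℕ) (hm : 1 ≤ m) :
    (∑' j : ℕ,
        ((m : ℝ) / ((m : ℝ) + 2 * (j : ℝ))) * (Nat.choose (m + 2 * j) (m + j) : ℝ) *
          (2 : ℝ) ^ (-((m : ℤ) + 2 * (j : ℤ))) / ((m : ℝ) + (j : ℝ) + 1)) =
      2 / (((m : ℝ) + 1) * ((m : ℝ) + 2)) := by
  rw [← (hasSum_firstPassage_div hm).tsum_eq]
  refine tsum_congr fun j => ?_
  rw [Nat.choose_symm_of_eq_add (by ring : m + 2 * j = m + j + j),
    show -((m : ℤ) + 2 * j) = -((m + 2 * j : ℕ) : ℤ) by push_cast; ring, zpow_neg, zpow_natCast]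
  rfl
end
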